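/- arXiv:2210.12862 — 5 statements merged into one kernel-verified Lean document; each statement's English description precedes it below -/
import Mathlib

section
/- Under the setup of the previous statement, with $\eta = \Sigma_{Z|Y}^{-1}(\alpha_1-\alpha_0)$, $\eta_0 = -\tfrac12(\alpha_0+\alpha_1)^\top\eta + \log(\pi_1/\pi_0)$, $\beta^a = a\,\Sigma_Z^{-1}(\alpha_1-\alpha_0)$, and $\beta_0^a = -\tfrac12(\alpha_0+\alpha_1)^\top\beta^a + [a - \pi_0\pi_1(\alpha_1-\alpha_0)^\top\beta^a]\log(\pi_1/\pi_0)$: for every $z\in\mathbb{R}^K$ and every $a>0$, $z^\top\eta + \eta_0 \ge 0$ if and only if $z^\top\beta^a + \beta_0^a \ge 0$. -/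
/-!
Write `d = α₁ - α₀` and `Δ² = dᵀ Σ_{Z|Y}⁻¹ d ≥ 0`. The unconditional covariance is a rank-one
update of the within-class one, and `Σ_Z η = (1 + π₀π₁Δ²) d`, so `β^a = t η` with
`t = a / (1 + π₀π₁Δ²) > 0`. The intercept is built so that `a - π₀π₁ dᵀβ^a = t` as well, hence
`β₀^a = t η₀`, and both discriminants differ by the positive factor `t`.
-/

open Matrix

namespace Matrix

variable {n 𝕜 : Type*} [Fintype n] [DecidableEq n] [Field 𝕜]

theorem add_smul_vecMulVec_self_mulVec_inv_mulVec {S : Matrix n n 𝕜} (hS : IsUnit S) (c : 𝕜)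
    (d : n → 𝕜) :
    (S + c • vecMulVec d d) *ᵥ (S⁻¹ *ᵥ d) = (1 + c * (d ⬝ᵥ S⁻¹ *ᵥ d)) • d := by
  rw [add_mulVec, mulVec_mulVec, mul_nonsing_inv _ ((isUnit_iff_isUnit_det S).mp hS), one_mulVec,
    smul_mulVec, vecMulVec_mulVec, op_smul_eq_smul, smul_smul, add_smul, one_smul]

theorem inv_mulVec_eq_inv_smul_of_mulVec_eq_smul {T : Matrix n n 𝕜} (hT : IsUnit T)
    {v d : n → 𝕜} {r : 𝕜} (hr : r ≠ 0) (h : T *ᵥ v = r • d) :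
    T⁻¹ *ᵥ d = r⁻¹ • v := by
  have hd : d = T *ᵥ (r⁻¹ • v) := by rw [mulVec_smul, h, inv_smul_smul₀ hr]
  rw [hd, mulVec_mulVec, nonsing_inv_mul _ ((isUnit_iff_isUnit_det T).mp hT), one_mulVec]

end Matrix

theorem stmt6_general {K : ℕ} (SZY : Matrix (Fin K) (Fin K) ℝ) (hZY : SZY.PosDef)
    (π0 π1 : ℝ) (h0 : 0 < π0) (h1 : 0 < π1)
    (α0 α1 : Fin K → ℝ)
    (SZ : Matrix (Fin K) (Fin K) ℝ)
    (hSZ : SZ = SZY + (π0 * π1) • vecMulVec (α1 - α0) (α1 - α0))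
    (η : Fin K → ℝ) (hη : η = SZY⁻¹.mulVec (α1 - α0))
    (η0 : ℝ) (hη0 : η0 = -(1/2) * ((α0 + α1) ⬝ᵥ η) + Real.log (π1 / π0)) :
    ∀ a : ℝ, 0 < a → ∀ z : Fin K → ℝ,
      ∀ βa : Fin K → ℝ, βa = a • SZ⁻¹.mulVec (α1 - α0) →
      ∀ β0a : ℝ, β0a = -(1/2) * ((α0 + α1) ⬝ᵥ βa)
          + (a - π0 * π1 * ((α1 - α0) ⬝ᵥ βa)) * Real.log (π1 / π0) →
      (0 ≤ z ⬝ᵥ η + η0 ↔ 0 ≤ z ⬝ᵥ βa + β0a) := by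
  intro a ha z βa hβa β0a hβ0a
  set d := α1 - α0
  set c := π0 * π1
  have hc : 0 ≤ c := (mul_pos h0 h1).le
  have hΔ : 0 ≤ d ⬝ᵥ η := by
    simpa [hη, star_trivial] using hZY.inv.posSemidef.dotProduct_mulVec_nonneg d
  have hr : 0 < 1 + c * (d ⬝ᵥ η) := by positivity
  have hSZ_pd : SZ.PosDef :=
    hSZ ▸ hZY.add_posSemidef ((posSemidef_vecMulVec_self_star d).smul hc)
  have hSZη : SZ *ᵥ η = (1 + c * (d ⬝ᵥ η)) • d := by
    rw [hSZ, hη]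
    exact add_smul_vecMulVec_self_mulVec_inv_mulVec hZY.isUnit c d
  set t := a / (1 + c * (d ⬝ᵥ η))
  have hβ : βa = t • η := by
    rw [hβa, inv_mulVec_eq_inv_smul_of_mulVec_eq_smul hSZ_pd.isUnit hr.ne' hSZη, smul_smul,
      ← div_eq_mul_inv]
  have hβ0 : β0a = t * η0 := by
    have hslope : a - c * (d ⬝ᵥ βa) = t := by
      rw [hβ, dotProduct_smul, smul_eq_mul]
      simp only [t]
      field_simp
      ring
    rw [hβ0a, hslope, hη0, hβ, dotProduct_smul, smul_eq_mul]
    ring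
  rw [hβ, hβ0, dotProduct_smul, smul_eq_mul, ← mul_add,
    mul_nonneg_iff_of_pos_left (by positivity)]

/-- Equivalence of the Bayes linear discriminant rule (within-class metric) and the
regression-based linear rule (unconditional metric): for every `z` and every `a > 0`,
`zᵀη + η0 ≥ 0 ↔ zᵀβᵃ + β0ᵃ ≥ 0`. -/
theorem stmt6 {K : ℕ} (SZY : Matrix (Fin K) (Fin K) ℝ) (hZY : SZY.PosDef)
    (π0 π1 : ℝ) (h0 : 0 < π0) (h1 : 0 < π1) (hsum : π0 + π1 = 1)
    (α0 α1 : Fin K → ℝ)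
    (SZ : Matrix (Fin K) (Fin K) ℝ)
    (hSZ : SZ = SZY + (π0 * π1) • vecMulVec (α1 - α0) (α1 - α0))
    (η : Fin K → ℝ) (hη : η = SZY⁻¹.mulVec (α1 - α0))
    (η0 : ℝ) (hη0 : η0 = -(1/2) * ((α0 + α1) ⬝ᵥ η) + Real.log (π1 / π0)) :
    ∀ a : ℝ, 0 < a → ∀ z : Fin K → ℝ,
      ∀ βa : Fin K → ℝ, βa = a • SZ⁻¹.mulVec (α1 - α0) →
      ∀ β0a : ℝ, β0a = -(1/2) * ((α0 + α1) ⬝ᵥ βa)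
          + (a - π0 * π1 * ((α1 - α0) ⬝ᵥ βa)) * Real.log (π1 / π0) →
      (0 ≤ z ⬝ᵥ η + η0 ↔ 0 ≤ z ⬝ᵥ βa + β0a) :=
  stmt6_general SZY hZY π0 π1 h0 h1 α0 α1 SZ hSZ η hη η0 hη0
end

section
/- Let $A$ be a $p\times K$ matrix of rank $K$, $\Sigma_{Z|Y}\succ 0$ a $K\times K$ matrix, $\Sigma_W \succ 0$ a $p\times p$ matrix, and $\alpha_0,\alpha_1\in\mathbb{R}^K$. Define $\Delta^2 = (\alpha_1-\alpha_0)^\top\Sigma_{Z|Y}^{-1}(\alpha_1-\alpha_0)$ and $\Delta_x^2 = (\alpha_1-\alpha_0)^\top A^\top(A\Sigma_{Z|Y}A^\top + \Sigma_W)^{-1}A(\alpha_1-\alpha_0)$. Then $\Delta^2 - \Delta_x^2 = (\alpha_1-\alpha_0)^\top\Sigma_{Z|Y}^{-1/2}\big(I_K + \Sigma_{Z|Y}^{1/2}A^\top\Sigma_W^{-1}A\Sigma_{Z|Y}^{1/2}\big)^{-1}\Sigma_{Z|Y}^{-1/2}(\alpha_1-\alpha_0)$; in particular $0 \le \Delta^2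 - \Delta_x^2 \le \frac{\Delta^2}{1+\lambda_K(H)}$ where $H = \Sigma_{Z|Y}^{1/2}A^\top\Sigma_W^{-1}A\Sigma_{Z|Y}^{1/2}$ and $\lambda_K(H)$ is its smallest eigenvalue. -/
/-!
Woodbury's identity writes `Σ⁻¹ - Aᵀ(AΣAᵀ + Σ_W)⁻¹A` as `Σ⁻¹ M⁻¹ Σ⁻¹` with
`M = Σ⁻¹ + Aᵀ Σ_W⁻¹ A`, and conjugating by the square root `R = Σ^{1/2}` turns `Σ⁻¹ M⁻¹ Σ⁻¹`
into `R⁻¹ (I + H)⁻¹ R⁻¹`. In the variable `u = R⁻¹ (α₁ - α₀)` we get `Δ² = uᵀu` and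
`Δ² - Δx² = uᵀ (I + H)⁻¹ u`; since `H ⪰ 0`, functional calculus gives
`0 ⪯ (I + H)⁻¹ ⪯ (1 + λ_min(H))⁻¹ I`, which yields both bounds.
-/

open Matrix
open scoped MatrixOrder

namespace Matrix

theorem dotProduct_transpose_mul_mul_mulVec {n R : Type*} [Fintype n] [CommSemiring R]
    (P X : Matrix n n R) (v : n → R) : v ⬝ᵥ (Pᵀ * X * P) *ᵥ v = (P *ᵥ v) ⬝ᵥ X *ᵥ (P *ᵥ v) := by
  rw [← mulVec_mulVec, ← mulVec_mulVec, dotProduct_mulVec, vecMul_transpose]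

section Woodbury

variable {α : Type*} [CommRing α] {m n : Type*} [Fintype m] [Fintype n]
  [DecidableEq m] [DecidableEq n]

theorem inv_sub_mul_inv_mul_add_mul (S : Matrix n n α) (W : Matrix m m α) (U : Matrix m n α)
    (V : Matrix n m α) (hS : IsUnit S) (hW : IsUnit W) (hM : IsUnit (S⁻¹ + V * W⁻¹ * U)) :
    S⁻¹ - V * (U * S * V + W)⁻¹ * U = S⁻¹ * (S⁻¹ + V * W⁻¹ * U)⁻¹ * S⁻¹ := by
  rw [add_comm (U * S * V), add_mul_mul_inv_eq_sub W U S V hW hS hM]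
  set B := V * W⁻¹ * U
  set M := S⁻¹ + B
  have hMM : M * M⁻¹ = 1 := mul_nonsing_inv M ((isUnit_iff_isUnit_det M).mp hM)
  have hMM' : M⁻¹ * M = 1 := nonsing_inv_mul M ((isUnit_iff_isUnit_det M).mp hM)
  -- `S⁻¹ = M - B`, so the right-hand side expands to `M - 2B + B M⁻¹ B`
  have hSinv : S⁻¹ = M - B := (add_sub_cancel_right _ _).symm
  calc S⁻¹ - V * (W⁻¹ - W⁻¹ * U * M⁻¹ * V * W⁻¹) * U = S⁻¹ - B + B * M⁻¹ * B := by
        simp only [B, Matrix.mul_sub, Matrix.sub_mul, Matrix.mul_assoc]; abel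
    _ = (M - B) * M⁻¹ * (M - B) := by
        simp only [Matrix.sub_mul, Matrix.mul_sub, hMM, Matrix.mul_assoc, hMM', Matrix.mul_one,
          Matrix.one_mul, hSinv]
        abel
    _ = S⁻¹ * M⁻¹ * S⁻¹ := by rw [hSinv]

theorem inv_mul_inv_add_inv_mul_inv_of_mul_self {R : Matrix n n α} (hR : IsUnit R)
    (B : Matrix n n α) :
    (R * R)⁻¹ * ((R * R)⁻¹ + B)⁻¹ * (R * R)⁻¹ = R⁻¹ * (1 + R * B * R)⁻¹ * R⁻¹ := by
  have hR' : IsUnit R.det := (isUnit_iff_isUnit_det R).mp hR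
  have hM : (R * R)⁻¹ + B = R⁻¹ * (1 + R * B * R) * R⁻¹ := by
    simp only [Matrix.mul_add, Matrix.add_mul, Matrix.mul_one, Matrix.mul_assoc, mul_inv_rev,
      mul_nonsing_inv R hR', nonsing_inv_mul_cancel_left R _ hR']
  rw [hM]
  simp only [Matrix.mul_inv_rev, nonsing_inv_nonsing_inv R hR', Matrix.mul_assoc,
    nonsing_inv_mul_cancel_left R _ hR', mul_nonsing_inv_cancel_left R _ hR']

theorem inv_mul_self_sub_mul_inv_mul_add_mul {R : Matrix n n α} (W : Matrix m m α)
    (U : Matrix m n α) (V : Matrix n m α) (hR : IsUnit R) (hW : IsUnit W)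
    (hM : IsUnit ((R * R)⁻¹ + V * W⁻¹ * U)) :
    (R * R)⁻¹ - V * (U * (R * R) * V + W)⁻¹ * U = R⁻¹ * (1 + R * V * W⁻¹ * U * R)⁻¹ * R⁻¹ := by
  rw [inv_sub_mul_inv_mul_add_mul _ W U V (hR.mul hR) hW hM,
    inv_mul_inv_add_inv_mul_inv_of_mul_self hR]
  simp only [Matrix.mul_assoc]

end Woodbury

section FunctionalCalculus

variable {n : Type*} [Fintype n] [DecidableEq n] {S H : Matrix n n ℝ}

theorem transpose_cfc (f : ℝ → ℝ) (A : Matrix n n ℝ) : (cfc f A)ᵀ = cfc f A := by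
  rw [← conjTranspose_eq_transpose_of_trivial, ← star_eq_conjTranspose,
    (cfc_predicate f A).star_eq]

theorem IsHermitian.eigenvectorUnitary_mul_diagonal_mul_star_eq_cfc (hS : S.IsHermitian)
    (f : ℝ → ℝ) :
    (hS.eigenvectorUnitary : Matrix n n ℝ) * diagonal (f ∘ hS.eigenvalues) *
      star (hS.eigenvectorUnitary : Matrix n n ℝ) = cfc f S := by
  rw [hS.cfc_eq, IsHermitian.cfc, Unitary.conjStarAlgAut_apply]
  rfl

theorem PosSemidef.cfc_sqrt_mul_self (hS : S.PosSemidef) :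
    cfc Real.sqrt S * cfc Real.sqrt S = S := by
  rw [← cfc_mul Real.sqrt Real.sqrt S]
  conv_rhs => rw [← cfc_id' ℝ S]
  exact cfc_congr fun x hx => Real.mul_self_sqrt (spectrum_nonneg_of_nonneg hS.nonneg hx)

theorem PosSemidef.inv_one_add_eq_cfc (hH : H.PosSemidef) :
    (1 + H)⁻¹ = cfc (fun x : ℝ => (1 + x)⁻¹) H := by
  rw [cfc_inv (fun x : ℝ => 1 + x) H, cfc_add H (fun _ => 1) (fun x => x), cfc_const_one ℝ H,
    cfc_id' ℝ H, nonsing_inv_eq_ringInverse]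
  intro x hx
  have := spectrum_nonneg_of_nonneg hH.nonneg hx
  positivity

theorem PosSemidef.inv_one_add_le_smul_one (hH : H.PosSemidef) :
    (1 + H)⁻¹ ≤ (1 + ⨅ i, hH.1.eigenvalues i)⁻¹ • (1 : Matrix n n ℝ) := by
  have hmin : 0 ≤ ⨅ i, hH.1.eigenvalues i := Real.iInf_nonneg hH.eigenvalues_nonneg
  rw [hH.inv_one_add_eq_cfc, ← Algebra.algebraMap_eq_smul_one, ← cfc_const _ H]
  refine cfc_mono (fun x hx => ?_) (H.finite_real_spectrum.continuousOn _)
  obtain ⟨i, rfl⟩ := hH.1.spectrum_real_eq_range_eigenvalues ▸ hx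
  have := ciInf_le (Set.finite_range hH.1.eigenvalues).bddBelow i
  gcongr

theorem PosSemidef.dotProduct_inv_one_add_mulVec_le (hH : H.PosSemidef) (u : n → ℝ) :
    u ⬝ᵥ (1 + H)⁻¹ *ᵥ u ≤ (u ⬝ᵥ u) / (1 + ⨅ i, hH.1.eigenvalues i) := by
  have := (le_iff.mp hH.inv_one_add_le_smul_one).dotProduct_mulVec_nonneg u
  rw [star_trivial, sub_mulVec, dotProduct_sub, smul_mulVec, one_mulVec, dotProduct_smul,
    smul_eq_mul, sub_nonneg] at this
  rwa [div_eq_inv_mul]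

end FunctionalCalculus

end Matrix

theorem stmt8_general {p K : ℕ}
    (A : Matrix (Fin p) (Fin K) ℝ)
    (SZY : Matrix (Fin K) (Fin K) ℝ) (hZY : SZY.PosDef)
    (SW : Matrix (Fin p) (Fin p) ℝ) (hW : SW.PosDef)
    (α0 α1 : Fin K → ℝ)
    (R : Matrix (Fin K) (Fin K) ℝ) (hR : R = (hZY.posSemidef.1.eigenvectorUnitary : Matrix (Fin K) (Fin K) ℝ) *
      diagonal (Real.sqrt ∘ hZY.posSemidef.1.eigenvalues) *
      (star (hZY.posSemidef.1.eigenvectorUnitary : Matrix (Fin K) (Fin K) ℝ)))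
    (H : Matrix (Fin K) (Fin K) ℝ) (hH : H = R * Aᵀ * SW⁻¹ * A * R)
    (hHerm : H.IsHermitian)
    (Δ2 Δx2 : ℝ)
    (hΔ2 : Δ2 = (α1 - α0) ⬝ᵥ SZY⁻¹.mulVec (α1 - α0))
    (hΔx2 : Δx2 = (α1 - α0) ⬝ᵥ (Aᵀ * (A * SZY * Aᵀ + SW)⁻¹ * A).mulVec (α1 - α0)) :
    Δ2 - Δx2 = (α1 - α0) ⬝ᵥ (R⁻¹ * (1 + H)⁻¹ * R⁻¹).mulVec (α1 - α0)
    ∧ 0 ≤ Δ2 - Δx2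
    ∧ Δ2 - Δx2 ≤ Δ2 / (1 + (⨅ i, hHerm.eigenvalues i)) := by
  have hRsq : R = cfc Real.sqrt SZY := by
    rw [hR, hZY.posSemidef.1.eigenvectorUnitary_mul_diagonal_mul_star_eq_cfc]
  have hRR : R * R = SZY := hRsq ▸ hZY.posSemidef.cfc_sqrt_mul_self
  have hRu : IsUnit R := isUnit_of_mul_isUnit_left (hRR ▸ hZY.isUnit)
  have hRT : Rᵀ = R := hRsq ▸ transpose_cfc Real.sqrt SZY
  have hRinvT : R⁻¹ᵀ = R⁻¹ := by rw [transpose_nonsing_inv, hRT]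
  have hBpsd : (Aᵀ * SW⁻¹ * A).PosSemidef := by
    simpa only [conjTranspose_eq_transpose_of_trivial] using
      hW.inv.posSemidef.conjTranspose_mul_mul_same A
  have hHpsd : H.PosSemidef := by
    rw [hH, show R * Aᵀ * SW⁻¹ * A * R = Rᵀ * (Aᵀ * SW⁻¹ * A) * R by
      simp only [hRT, Matrix.mul_assoc]]
    simpa only [conjTranspose_eq_transpose_of_trivial] using hBpsd.conjTranspose_mul_mul_same R
  have hgap : Δ2 - Δx2 = (α1 - α0) ⬝ᵥ (R⁻¹ * (1 + H)⁻¹ * R⁻¹).mulVec (α1 - α0) := by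
    have hM : IsUnit ((R * R)⁻¹ + Aᵀ * SW⁻¹ * A) := hRR ▸ (hZY.inv.add_posSemidef hBpsd).isUnit
    rw [hΔ2, hΔx2, ← dotProduct_sub, ← sub_mulVec, ← hRR,
      inv_mul_self_sub_mul_inv_mul_add_mul SW A Aᵀ hRu hW.isUnit hM, hH]
  set u := R⁻¹ *ᵥ (α1 - α0)
  have hgap_u : Δ2 - Δx2 = u ⬝ᵥ (1 + H)⁻¹ *ᵥ u := by
    rw [hgap, ← dotProduct_transpose_mul_mul_mulVec, hRinvT]
  have hΔ2_u : Δ2 = u ⬝ᵥ u := by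
    have hSZYinv : SZY⁻¹ = R⁻¹ᵀ * 1 * R⁻¹ := by
      rw [hRinvT, Matrix.mul_one, ← Matrix.mul_inv_rev, hRR]
    rw [hΔ2, hSZYinv, dotProduct_transpose_mul_mul_mulVec, one_mulVec]
  refine ⟨hgap, ?_, ?_⟩
  · simpa only [hgap_u, star_trivial] using
      (PosDef.one.add_posSemidef hHpsd).inv.posSemidef.dotProduct_mulVec_nonneg u
  · rw [hgap_u, hΔ2_u]
    exact hHpsd.dotProduct_inv_one_add_mulVec_le u

/-- Woodbury identity for the loss in Mahalanobis separation:
`Δ² - Δx² = (α1-α0)ᵀ Σ^{-1/2} (I + H)⁻¹ Σ^{-1/2} (α1-α0)` with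
`H = Σ^{1/2} Aᵀ ΣW⁻¹ A Σ^{1/2}`, and `0 ≤ Δ² - Δx² ≤ Δ² / (1 + λ_K(H))`. -/
theorem stmt8 {p K : ℕ} (hK : 0 < K)
    (A : Matrix (Fin p) (Fin K) ℝ) (hA : A.rank = K)
    (SZY : Matrix (Fin K) (Fin K) ℝ) (hZY : SZY.PosDef)
    (SW : Matrix (Fin p) (Fin p) ℝ) (hW : SW.PosDef)
    (α0 α1 : Fin K → ℝ)
    (R : Matrix (Fin K) (Fin K) ℝ) (hR : R = (hZY.posSemidef.1.eigenvectorUnitary : Matrix (Fin K) (Fin K) ℝ) *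
      diagonal (Real.sqrt ∘ hZY.posSemidef.1.eigenvalues) *
      (star (hZY.posSemidef.1.eigenvectorUnitary : Matrix (Fin K) (Fin K) ℝ)))
    (H : Matrix (Fin K) (Fin K) ℝ) (hH : H = R * Aᵀ * SW⁻¹ * A * R)
    (hHerm : H.IsHermitian)
    (Δ2 Δx2 : ℝ)
    (hΔ2 : Δ2 = (α1 - α0) ⬝ᵥ SZY⁻¹.mulVec (α1 - α0))
    (hΔx2 : Δx2 = (α1 - α0) ⬝ᵥ (Aᵀ * (A * SZY * Aᵀ + SW)⁻¹ * A).mulVec (α1 - α0)) :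
    Δ2 - Δx2 = (α1 - α0) ⬝ᵥ (R⁻¹ * (1 + H)⁻¹ * R⁻¹).mulVec (α1 - α0)
    ∧ 0 ≤ Δ2 - Δx2
    ∧ Δ2 - Δx2 ≤ Δ2 / (1 + (⨅ i, hHerm.eigenvalues i)) :=
  stmt8_general A SZY hZY SW hW α0 α1 R hR H hH hHerm Δ2 Δx2 hΔ2 hΔx2
end

section
/- With $\Delta$, $\Delta_x$, and $H$ as above, and $\xi^* := \lambda_K(A\Sigma_{Z|Y}A^\top)/\lambda_1(\Sigma_W)$: one has $\lambda_K(H) \ge \xi^*$ and $\Delta^2 \ge \Delta_x^2 \ge \Delta^2\,\dfrac{\xi^*}{1+\xi^*}$. -/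
/-!
Put `B = A Σ_{Z|Y}^{1/2}`, so that `G = BᵀB` and `H = Bᵀ Σ_W⁻¹ B`. In the Loewner order
`Σ_W⁻¹ ⪰ λ₁(Σ_W)⁻¹ I` and `BᵀB ⪰ λ_min(G) I`, hence `H ⪰ ξ I`. Writing
`α₁ - α₀ = Σ_{Z|Y}^{1/2} w` gives `Δ² = |w|²`, and the push-through identity
`Bᵀ (BBᵀ + Σ_W)⁻¹ B = I - (I + H)⁻¹` gives `Δₓ² = |w|² - wᵀ (I + H)⁻¹ w`; the sandwich
follows from `0 ⪯ (I + H)⁻¹ ⪯ (1 + ξ)⁻¹ I`.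
-/

open Matrix
open scoped MatrixOrder

namespace Matrix

section LoewnerOrder

variable {m n : Type*} [Fintype m] [Fintype n]

lemma IsHermitian.smul_one_le_iff [DecidableEq n] {M : Matrix n n ℝ} (hM : M.IsHermitian)
    {c : ℝ} : c • 1 ≤ M ↔ ∀ i, c ≤ hM.eigenvalues i := by
  rw [← Algebra.algebraMap_eq_smul_one, algebraMap_le_iff_le_spectrum (a := M) hM.isSelfAdjoint,
    hM.spectrum_real_eq_range_eigenvalues, Set.forall_mem_range]

lemma IsHermitian.iInf_eigenvalues_smul_one_le [DecidableEq n] {M : Matrix n n ℝ}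
    (hM : M.IsHermitian) : (⨅ i, hM.eigenvalues i) • 1 ≤ M :=
  hM.smul_one_le_iff.2 fun i => ciInf_le (Set.finite_range _).bddBelow i

lemma spectrum_nonsing_inv {𝕜 : Type*} [Field 𝕜] [DecidableEq n] {M : Matrix n n 𝕜}
    (hM : IsUnit M) : spectrum 𝕜 M⁻¹ = (spectrum 𝕜 M)⁻¹ := by
  simpa using (spectrum.map_inv hM.unit).symm

lemma PosDef.inv_iSup_eigenvalues_smul_one_le_inv [DecidableEq n] {W : Matrix n n ℝ}
    (hW : W.PosDef) : (⨆ i, hW.1.eigenvalues i)⁻¹ • 1 ≤ W⁻¹ := by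
  rw [← Algebra.algebraMap_eq_smul_one,
    algebraMap_le_iff_le_spectrum (a := W⁻¹) hW.inv.1.isSelfAdjoint]
  intro x hx
  rw [spectrum_nonsing_inv hW.isUnit, Set.mem_inv, hW.1.spectrum_real_eq_range_eigenvalues] at hx
  obtain ⟨i, hi⟩ := hx
  rw [← inv_inv x, ← hi]
  exact inv_anti₀ (hW.eigenvalues_pos i) (le_ciSup (Set.finite_range _).bddAbove i)

lemma PosDef.inv_le_inv_smul_one [DecidableEq n] {M : Matrix n n ℝ} (hM : M.PosDef) {c : ℝ}
    (hc : 0 < c) (h : c • 1 ≤ M) : M⁻¹ ≤ c⁻¹ • 1 := by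
  rw [← Algebra.algebraMap_eq_smul_one] at h ⊢
  rw [algebraMap_le_iff_le_spectrum (a := M) hM.1.isSelfAdjoint] at h
  rw [le_algebraMap_iff_spectrum_le (a := M⁻¹) hM.inv.1.isSelfAdjoint]
  intro x hx
  rw [spectrum_nonsing_inv hM.isUnit, Set.mem_inv] at hx
  rw [← inv_inv x]
  exact inv_anti₀ hc (h _ hx)

lemma transpose_mul_mul_le_of_le {X Y : Matrix m m ℝ} (h : X ≤ Y) (B : Matrix m n ℝ) :
    Bᵀ * X * B ≤ Bᵀ * Y * B := by
  rw [le_iff, ← Matrix.sub_mul, ← Matrix.mul_sub, ← conjTranspose_eq_transpose_of_trivial]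
  exact (le_iff.1 h).conjTranspose_mul_mul_same B

lemma dotProduct_mulVec_le_of_le {X Y : Matrix n n ℝ} (h : X ≤ Y) (w : n → ℝ) :
    w ⬝ᵥ X *ᵥ w ≤ w ⬝ᵥ Y *ᵥ w := by
  simpa [sub_mulVec, dotProduct_sub] using (le_iff.1 h).dotProduct_mulVec_nonneg w

lemma smul_one_le_transpose_mul_inv_mul [DecidableEq m] [DecidableEq n] (B : Matrix m n ℝ)
    {W : Matrix m m ℝ} (hW : W.PosDef) (hG : (Bᵀ * B).IsHermitian) :
    ((⨅ i, hG.eigenvalues i) / (⨆ i, hW.1.eigenvalues i)) • 1 ≤ Bᵀ * W⁻¹ * B := by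
  set g := ⨅ i, hG.eigenvalues i
  set s := ⨆ i, hW.1.eigenvalues i
  have hs : 0 ≤ s⁻¹ := inv_nonneg.2 (Real.iSup_nonneg fun i => (hW.eigenvalues_pos i).le)
  calc (g / s) • (1 : Matrix n n ℝ) = s⁻¹ • (g • 1) := by rw [smul_smul, div_eq_inv_mul]
    _ ≤ s⁻¹ • (Bᵀ * B) := smul_le_smul_of_nonneg_left hG.iInf_eigenvalues_smul_one_le hs
    _ = Bᵀ * (s⁻¹ • (1 : Matrix m m ℝ)) * B := by simp
    _ ≤ Bᵀ * W⁻¹ * B := transpose_mul_mul_le_of_le hW.inv_iSup_eigenvalues_smul_one_le_inv B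

lemma one_sub_inv_one_add_le_one [DecidableEq n] {H : Matrix n n ℝ} (hH : 0 ≤ H) :
    1 - (1 + H)⁻¹ ≤ 1 :=
  sub_le_self _ <| nonneg_iff_posSemidef.2
    (PosDef.one.add_posSemidef (nonneg_iff_posSemidef.1 hH)).inv.posSemidef

lemma smul_one_le_one_sub_inv_one_add [DecidableEq n] {H : Matrix n n ℝ} {ξ : ℝ} (hξ : 0 ≤ ξ)
    (h : ξ • 1 ≤ H) : (ξ / (1 + ξ)) • 1 ≤ 1 - (1 + H)⁻¹ := by
  have hpd : (1 + H).PosDef := PosDef.one.add_posSemidef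
    (nonneg_iff_posSemidef.1 ((smul_nonneg hξ zero_le_one).trans h))
  have hinv : (1 + H)⁻¹ ≤ (1 + ξ)⁻¹ • 1 :=
    hpd.inv_le_inv_smul_one (by positivity) (by rw [add_smul, one_smul]; gcongr)
  calc (ξ / (1 + ξ)) • (1 : Matrix n n ℝ) = 1 - (1 + ξ)⁻¹ • 1 := by
        rw [show ξ / (1 + ξ) = 1 - (1 + ξ)⁻¹ by field_simp; ring, sub_smul, one_smul]
    _ ≤ 1 - (1 + H)⁻¹ := sub_le_sub_left hinv 1

end LoewnerOrder

lemma mul_inv_add_mul_eq_one_sub {m n α : Type*} [Fintype m] [Fintype n] [DecidableEq m]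
    [DecidableEq n] [CommRing α] (U : Matrix m n α) (V : Matrix n m α) (W : Matrix m m α)
    (hW : IsUnit W.det) (hN : IsUnit (U * V + W).det) (hH : IsUnit (1 + V * W⁻¹ * U).det) :
    V * (U * V + W)⁻¹ * U = 1 - (1 + V * W⁻¹ * U)⁻¹ := by
  set H := V * W⁻¹ * U
  have push : (U * V + W) * (W⁻¹ * U) = U * (1 + H) := by
    rw [Matrix.add_mul, mul_nonsing_inv_cancel_left _ _ hW, Matrix.mul_add, Matrix.mul_one,
      add_comm]
    simp only [H, Matrix.mul_assoc]
  have hNU : (U * V + W)⁻¹ * U = W⁻¹ * U * (1 + H)⁻¹ := by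
    rw [← nonsing_inv_mul_cancel_left _ (W⁻¹ * U) hN, push, ← Matrix.mul_assoc,
      mul_nonsing_inv_cancel_right _ _ hH]
  calc V * (U * V + W)⁻¹ * U = H * (1 + H)⁻¹ := by
        rw [Matrix.mul_assoc, hNU]; simp only [H, Matrix.mul_assoc]
    _ = ((1 + H) - 1) * (1 + H)⁻¹ := by rw [add_sub_cancel_left]
    _ = 1 - (1 + H)⁻¹ := by rw [sub_mul, mul_nonsing_inv _ hH, one_mul]

lemma PosDef.transpose_mul_inv_mul_transpose_add_mul {m n : Type*} [Fintype m] [Fintype n]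
    [DecidableEq m] [DecidableEq n] (B : Matrix m n ℝ) {W : Matrix m m ℝ} (hW : W.PosDef) :
    Bᵀ * (B * Bᵀ + W)⁻¹ * B = 1 - (1 + Bᵀ * W⁻¹ * B)⁻¹ := by
  have hN : (B * Bᵀ + W).PosDef := by
    rw [← conjTranspose_eq_transpose_of_trivial]
    exact PosDef.posSemidef_add (posSemidef_self_mul_conjTranspose B) hW
  have hH : (1 + Bᵀ * W⁻¹ * B).PosDef := by
    rw [← conjTranspose_eq_transpose_of_trivial]
    exact PosDef.one.add_posSemidef (hW.inv.posSemidef.conjTranspose_mul_mul_same B)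
  exact mul_inv_add_mul_eq_one_sub B Bᵀ W hW.det_pos.ne'.isUnit hN.det_pos.ne'.isUnit
    hH.det_pos.ne'.isUnit

lemma PosSemidef.eigenvectorUnitary_mul_diagonal_sqrt_eq {n : Type*} [Fintype n] [DecidableEq n]
    {S : Matrix n n ℝ} (hS : S.PosSemidef) :
    (hS.1.eigenvectorUnitary : Matrix n n ℝ) * diagonal ((↑) ∘ (√·) ∘ hS.1.eigenvalues) *
      (star hS.1.eigenvectorUnitary : Matrix n n ℝ) = CFC.sqrt S := by
  rw [CFC.sqrt_eq_real_sqrt S (nonneg_iff_posSemidef.2 hS), cfcₙ_eq_cfc, hS.1.cfc_eq]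
  rfl

lemma dotProduct_mulVec_transpose_mul_mul {m n α : Type*} [Fintype m] [Fintype n]
    [CommSemiring α] (M : Matrix m m α) (R : Matrix m n α) (w : n → α) :
    w ⬝ᵥ (Rᵀ * M * R) *ᵥ w = (R *ᵥ w) ⬝ᵥ M *ᵥ (R *ᵥ w) := by
  rw [← mulVec_mulVec, ← mulVec_mulVec, dotProduct_mulVec, vecMul_transpose]

end Matrix

/-- `λ_K(A Σ_{Z|Y} Aᵀ)` is encoded as the smallest eigenvalue of
`G = Σ_{Z|Y}^{1/2} Aᵀ A Σ_{Z|Y}^{1/2}`, which has the same nonzero eigenvalues. -/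
theorem stmt9_general {p K : ℕ} (hK : 0 < K)
    (A : Matrix (Fin p) (Fin K) ℝ)
    (SZY : Matrix (Fin K) (Fin K) ℝ) (hZY : SZY.PosDef)
    (SW : Matrix (Fin p) (Fin p) ℝ) (hW : SW.PosDef)
    (α0 α1 : Fin K → ℝ)
    (R : Matrix (Fin K) (Fin K) ℝ) (hR : R = (hZY.posSemidef.1.eigenvectorUnitary : Matrix (Fin K) (Fin K) ℝ) *
      diagonal ((↑) ∘ (√·) ∘ hZY.posSemidef.1.eigenvalues) *
      (star hZY.posSemidef.1.eigenvectorUnitary : Matrix (Fin K) (Fin K) ℝ))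
    (H : Matrix (Fin K) (Fin K) ℝ) (hH : H = R * Aᵀ * SW⁻¹ * A * R)
    (hHerm : H.IsHermitian)
    (G : Matrix (Fin K) (Fin K) ℝ) (hG : G = R * Aᵀ * A * R)
    (hGerm : G.IsHermitian)
    (Δ2 Δx2 ξ : ℝ)
    (hΔ2 : Δ2 = (α1 - α0) ⬝ᵥ SZY⁻¹.mulVec (α1 - α0))
    (hΔx2 : Δx2 = (α1 - α0) ⬝ᵥ (Aᵀ * (A * SZY * Aᵀ + SW)⁻¹ * A).mulVec (α1 - α0))
    (hξ : ξ = (⨅ i, hGerm.eigenvalues i) / (⨆ i, hW.1.eigenvalues i)) :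
    ξ ≤ (⨅ i, hHerm.eigenvalues i) ∧ Δx2 ≤ Δ2 ∧ Δ2 * (ξ / (1 + ξ)) ≤ Δx2 := by
  have : Nonempty (Fin K) := ⟨⟨0, hK⟩⟩
  rw [hZY.posSemidef.eigenvectorUnitary_mul_diagonal_sqrt_eq] at hR
  have hSZY : 0 ≤ SZY := nonneg_iff_posSemidef.2 hZY.posSemidef
  have hRR : R * R = SZY := hR ▸ CFC.sqrt_mul_sqrt_self SZY
  have hRt : Rᵀ = R := by
    rw [← conjTranspose_eq_transpose_of_trivial, ← star_eq_conjTranspose]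
    exact hR ▸ (CFC.sqrt_nonneg SZY).isSelfAdjoint
  have hRu : IsUnit R.det :=
    (isUnit_iff_isUnit_det R).1 (hR ▸ (CFC.isUnit_sqrt_iff SZY).2 hZY.isUnit)
  set B := A * R
  have hBt : Bᵀ = R * Aᵀ := by rw [transpose_mul, hRt]
  obtain rfl : H = Bᵀ * SW⁻¹ * B := by rw [hH, hBt]; simp only [B, Matrix.mul_assoc]
  obtain rfl : G = Bᵀ * B := by rw [hG, hBt]; simp only [B, Matrix.mul_assoc]
  have hξH : ξ • 1 ≤ Bᵀ * SW⁻¹ * B := hξ ▸ smul_one_le_transpose_mul_inv_mul B hW hGerm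
  have hGpsd : (Bᵀ * B).PosSemidef := by simpa using posSemidef_conjTranspose_mul_self B
  have hξ0 : 0 ≤ ξ := hξ ▸ div_nonneg (Real.iInf_nonneg hGpsd.eigenvalues_nonneg)
    (Real.iSup_nonneg fun i => (hW.eigenvalues_pos i).le)
  obtain ⟨w, hw⟩ : ∃ w, R *ᵥ w = α1 - α0 :=
    ⟨R⁻¹ *ᵥ (α1 - α0), by rw [mulVec_mulVec, mul_nonsing_inv _ hRu, one_mulVec]⟩
  have hΔ2w : Δ2 = w ⬝ᵥ w := by
    rw [hΔ2, ← hw, ← dotProduct_mulVec_transpose_mul_mul, hRt, ← hRR, Matrix.mul_inv_rev,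
      ← Matrix.mul_assoc, mul_nonsing_inv _ hRu, Matrix.one_mul, nonsing_inv_mul _ hRu, one_mulVec]
  have hΔx2w : Δx2 = w ⬝ᵥ (1 - (1 + Bᵀ * SW⁻¹ * B)⁻¹) *ᵥ w := by
    rw [hΔx2, ← hw, ← dotProduct_mulVec_transpose_mul_mul, ← hRR,
      ← hW.transpose_mul_inv_mul_transpose_add_mul B, hBt]
    simp only [B, hRt, Matrix.mul_assoc]
  have hH0 : 0 ≤ Bᵀ * SW⁻¹ * B := (smul_nonneg hξ0 zero_le_one).trans hξH
  refine ⟨le_ciInf (hHerm.smul_one_le_iff.1 hξH), ?_, ?_⟩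
  · simpa [hΔ2w, hΔx2w] using dotProduct_mulVec_le_of_le (one_sub_inv_one_add_le_one hH0) w
  · simpa [hΔ2w, hΔx2w, smul_mulVec, mul_comm] using
      dotProduct_mulVec_le_of_le (smul_one_le_one_sub_inv_one_add hξ0 hξH) w

/-- With `ξ* = λ_K(A ΣZY Aᵀ) / λ_1(ΣW)`: `λ_K(H) ≥ ξ*` and
`Δ² ≥ Δx² ≥ Δ² ξ*/(1+ξ*)`. Here `λ_K(A ΣZY Aᵀ)` is realized as the smallest
eigenvalue of `Σ^{1/2} Aᵀ A Σ^{1/2}` (the nonzero eigenvalues coincide since `A` has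
rank `K`), and `λ_1(ΣW)` is the largest eigenvalue of `ΣW`. -/
theorem stmt9 {p K : ℕ} (hp : 0 < p) (hK : 0 < K)
    (A : Matrix (Fin p) (Fin K) ℝ) (hA : A.rank = K)
    (SZY : Matrix (Fin K) (Fin K) ℝ) (hZY : SZY.PosDef)
    (SW : Matrix (Fin p) (Fin p) ℝ) (hW : SW.PosDef)
    (α0 α1 : Fin K → ℝ)
    (R : Matrix (Fin K) (Fin K) ℝ) (hR : R = (hZY.posSemidef.1.eigenvectorUnitary : Matrix (Fin K) (Fin K) ℝ) *
      diagonal ((↑) ∘ (√·) ∘ hZY.posSemidef.1.eigenvalues) *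
      (star hZY.posSemidef.1.eigenvectorUnitary : Matrix (Fin K) (Fin K) ℝ))
    (H : Matrix (Fin K) (Fin K) ℝ) (hH : H = R * Aᵀ * SW⁻¹ * A * R)
    (hHerm : H.IsHermitian)
    (G : Matrix (Fin K) (Fin K) ℝ) (hG : G = R * Aᵀ * A * R)
    (hGerm : G.IsHermitian)
    (Δ2 Δx2 ξ : ℝ)
    (hΔ2 : Δ2 = (α1 - α0) ⬝ᵥ SZY⁻¹.mulVec (α1 - α0))
    (hΔx2 : Δx2 = (α1 - α0) ⬝ᵥ (Aᵀ * (A * SZY * Aᵀ + SW)⁻¹ * A).mulVec (α1 - α0))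
    (hξ : ξ = (⨅ i, hGerm.eigenvalues i) / (⨆ i, hW.1.eigenvalues i)) :
    ξ ≤ (⨅ i, hHerm.eigenvalues i) ∧ Δx2 ≤ Δ2 ∧ Δ2 * (ξ / (1 + ξ)) ≤ Δx2 :=
  stmt9_general hK A SZY hZY SW hW α0 α1 R hR H hH hHerm G hG hGerm Δ2 Δx2 ξ hΔ2 hΔx2 hξ
end

section
/- Let $\Phi$ and $\varphi$ denote the standard normal c.d.f. and density. Let $\Delta \ge \Delta_x \ge 0$ with $\Delta^2 - \Delta_x^2 \le \Delta^2/(1+\lambda)$ for some $\lambda \ge 0$, and $\Delta_x^2 \ge \Delta^2\lambda/(1+\lambda)$. Then $\Phi(\Delta/2) - \Phi(\Delta_x/2) \le \frac{1}{2\sqrt{2\pi}}\cdot\frac{\Delta}{1+\lambda}\exp\!\big(-\frac{\lambda}{8(1+\lambda)}\Delta^2\big)$. -/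
/-! The gap `Φ(Δ/2) - Φ(Δx/2)` is at most the interval length `(Δ - Δx)/2` times the density
at `Δx/2`, since the density decreases on `[0, ∞)`. Writing `Δ² - Δx² = (Δ - Δx)(Δ + Δx)` with
`Δ + Δx ≥ Δ`, the first hypothesis gives `Δ - Δx ≤ Δ/(1+λ)`; the second bounds the density
at `Δx/2` by `exp(-λΔ²/(8(1+λ)))/√(2π)`. -/

open MeasureTheory Real Set

noncomputable def stdNormalCDF (x : ℝ) : ℝ :=
  ∫ t in Set.Iic x, Real.exp (-t ^ 2 / 2) / Real.sqrt (2 * Real.pi)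

noncomputable def stdNormalPDF (t : ℝ) : ℝ := exp (-t ^ 2 / 2) / √(2 * π)

lemma integrable_stdNormalPDF : Integrable stdNormalPDF := by
  have h : Integrable fun t : ℝ => exp (-(1 / 2) * t ^ 2) :=
    integrable_exp_neg_mul_sq (by norm_num)
  convert h.div_const √(2 * π) using 2 with t
  unfold stdNormalPDF
  ring_nf

lemma stdNormalPDF_le_of_sq_le {s t : ℝ} (h : s ^ 2 ≤ t ^ 2) :
    stdNormalPDF t ≤ stdNormalPDF s := by
  unfold stdNormalPDF
  gcongr

lemma stdNormalCDF_sub_eq_integral {a b : ℝ} (hab : a ≤ b) :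
    stdNormalCDF b - stdNormalCDF a = ∫ t in Ioc a b, stdNormalPDF t := by
  change (∫ t in Iic b, stdNormalPDF t) - ∫ t in Iic a, stdNormalPDF t = _
  rw [intervalIntegral.integral_Iic_sub_Iic integrable_stdNormalPDF.integrableOn
      integrable_stdNormalPDF.integrableOn,
    intervalIntegral.integral_of_le hab]

lemma stdNormalCDF_sub_le {a b : ℝ} (ha : 0 ≤ a) (hab : a ≤ b) :
    stdNormalCDF b - stdNormalCDF a ≤ (b - a) * stdNormalPDF a := by
  rw [stdNormalCDF_sub_eq_integral hab]
  calc ∫ t in Ioc a b, stdNormalPDF t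
      ≤ ∫ _ in Ioc a b, stdNormalPDF a :=
        setIntegral_mono_on integrable_stdNormalPDF.integrableOn
          (integrableOn_const (by simp)) measurableSet_Ioc
          fun t ht => stdNormalPDF_le_of_sq_le (by nlinarith [ht.1, ht.2])
    _ = (b - a) * stdNormalPDF a := by
        rw [setIntegral_const, volume_real_Ioc_of_le hab, smul_eq_mul]

lemma sub_le_div_of_sq_sub_sq_le_div {x y c : ℝ} (hy : 0 ≤ y) (hyx : y ≤ x) (hc : 0 < c)
    (h : x ^ 2 - y ^ 2 ≤ x ^ 2 / c) : x - y ≤ x / c := by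
  rw [le_div_iff₀ hc] at h ⊢
  nlinarith [mul_nonneg (mul_nonneg (sub_nonneg.2 hyx) hy) hc.le, mul_nonneg hy hc.le]

/-- Upper bound on the gap of normal CDFs:
`Φ(Δ/2) - Φ(Δx/2) ≤ (1/(2√(2π))) (Δ/(1+λ)) exp(-λΔ²/(8(1+λ)))`. -/
theorem stmt10 (Δ Δx lam : ℝ) (hx0 : 0 ≤ Δx) (hxle : Δx ≤ Δ) (hlam : 0 ≤ lam)
    (h1 : Δ ^ 2 - Δx ^ 2 ≤ Δ ^ 2 / (1 + lam))
    (h2 : Δ ^ 2 * lam / (1 + lam) ≤ Δx ^ 2) :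
    stdNormalCDF (Δ / 2) - stdNormalCDF (Δx / 2)
      ≤ (1 / (2 * Real.sqrt (2 * Real.pi))) * (Δ / (1 + lam))
        * Real.exp (-(lam * Δ ^ 2) / (8 * (1 + lam))) := by
  have hlam1 : 0 < 1 + lam := by linarith
  have hgap : Δ / 2 - Δx / 2 ≤ Δ / (1 + lam) / 2 := by
    linarith [sub_le_div_of_sq_sub_sq_le_div hx0 hxle hlam1 h1]
  have hpdf : stdNormalPDF (Δx / 2) ≤ exp (-(lam * Δ ^ 2) / (8 * (1 + lam))) / √(2 * π) := by
    unfold stdNormalPDF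
    gcongr exp ?_ / _
    calc -(lam * Δ ^ 2) / (8 * (1 + lam)) = -(Δ ^ 2 * lam / (1 + lam)) / 8 := by field_simp
      _ ≥ -Δx ^ 2 / 8 := by linarith
      _ = -(Δx / 2) ^ 2 / 2 := by ring
  calc stdNormalCDF (Δ / 2) - stdNormalCDF (Δx / 2)
      ≤ (Δ / 2 - Δx / 2) * stdNormalPDF (Δx / 2) :=
        stdNormalCDF_sub_le (by positivity) (by linarith)
    _ ≤ Δ / (1 + lam) / 2 * (exp (-(lam * Δ ^ 2) / (8 * (1 + lam))) / √(2 * π)) := by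
        gcongr
        · exact div_nonneg (exp_pos _).le (sqrt_nonneg _)
        · linarith
    _ = _ := by ring
end

section
/- (Hypercube packing of unit vectors.) For every integer $m\ge 1$ there exist unit vectors $J^{(1)},\dots,J^{(M)} \in \mathbb{R}^m$ (i.e., $\|J^{(i)}\|_2=1$) such that: (1) $\|J^{(i)}-J^{(j)}\|_2^2 \ge 1/4$ for all $i\ne j$, and (2) $\log M \ge \max\{cm, \log m\}$ for an absolute constant $c > 1/30$. -/
/-!
Scaling the `±1` vectors of a binary code of length `m` by `1/√m` gives unit vectors whose squared
distances are `4 · (Hamming distance) / m`, so minimum distance `≥ m/16` suffices. A maximal such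
code (Gilbert–Varshamov) has at least `2^m / |ball of radius m/16|` words, and weighting words by
`15 ^ (number of agreements)` bounds the ball by `16^m / 15^(15m/16)`, so `log M ≥ 7m/16 ≥ log m`.
-/

open Matrix Finset

section HammingCode

variable {ι : Type*} [Fintype ι]

lemma sum_pow_card_agree [DecidableEq ι] (x : ι → Bool) (a : ℕ) :
    ∑ w : ι → Bool, a ^ #{k | w k = x k} = (a + 1) ^ Fintype.card ι := by
  have hprod (w : ι → Bool) : a ^ #{k | w k = x k} = ∏ k, if w k = x k then a else 1 := by
    rw [prod_ite, prod_const, prod_const_one, mul_one]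
  have hfactor (k : ι) : ∑ b : Bool, (if b = x k then a else 1) = a + 1 := by
    rw [Fintype.sum_bool]; cases x k <;> simp [add_comm]
  calc ∑ w : ι → Bool, a ^ #{k | w k = x k}
      = ∑ w : ι → Bool, ∏ k, if w k = x k then a else 1 := by simp_rw [hprod]
    _ = ∏ k, ∑ b : Bool, if b = x k then a else 1 :=
        (Fintype.prod_sum fun k (b : Bool) => if b = x k then a else 1).symm
    _ = (a + 1) ^ Fintype.card ι := by
        rw [prod_congr rfl fun k _ => hfactor k, prod_const, card_univ]

lemma card_hammingBall_mul_pow_le [DecidableEq ι] (x : ι → Bool) (r : ℕ) {a : ℕ} (ha : 1 ≤ a) :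
    #{w | hammingDist w x ≤ r} * a ^ (Fintype.card ι - r) ≤ (a + 1) ^ Fintype.card ι := by
  have hagree (w : ι → Bool) : #{k | w k = x k} + hammingDist w x = Fintype.card ι := by
    simpa [hammingDist] using card_filter_add_card_filter_not (s := univ) (fun k => w k = x k)
  calc #{w | hammingDist w x ≤ r} * a ^ (Fintype.card ι - r)
      = ∑ w ∈ {w | hammingDist w x ≤ r}, a ^ (Fintype.card ι - r) := by
        rw [sum_const, smul_eq_mul]
    _ ≤ ∑ w ∈ {w | hammingDist w x ≤ r}, a ^ #{k | w k = x k} := by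
        refine sum_le_sum fun w hw => Nat.pow_le_pow_right ha ?_
        have := hagree w
        have := (mem_filter.1 hw).2
        omega
    _ ≤ ∑ w : ι → Bool, a ^ #{k | w k = x k} := sum_le_sum_of_subset (filter_subset _ _)
    _ = (a + 1) ^ Fintype.card ι := sum_pow_card_agree x a

/-- Gilbert–Varshamov: a code of minimum distance `d` of maximal size covers every word within
distance `< d`. -/
lemma exists_hammingDist_separated_covering {α : Type*} [Fintype α] [DecidableEq α]
    {d : ℕ} (hd : 0 < d) :
    ∃ C : Finset (ι → α), (∀ x ∈ C, ∀ y ∈ C, x ≠ y → d ≤ hammingDist x y) ∧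
      ∀ v, ∃ x ∈ C, hammingDist v x < d := by
  classical
  let Separated (C : Finset (ι → α)) : Prop := ∀ x ∈ C, ∀ y ∈ C, x ≠ y → d ≤ hammingDist x y
  obtain ⟨C, hCmem, hmax⟩ := exists_max_image {C | Separated C} card ⟨∅, by simp [Separated]⟩
  have hC : Separated C := (mem_filter.1 hCmem).2
  refine ⟨C, hC, fun v => ?_⟩
  by_contra! hfar
  have hvC : v ∉ C := fun hv => by simpa using (hfar v hv).trans_lt' hd
  have hvC' : Separated (insert v C) := by
    simp only [Separated, mem_insert]
    rintro x (rfl | hx) y (rfl | hy) hxy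
    · exact absurd rfl hxy
    · exact hfar y hy
    · exact hammingDist_comm x y ▸ hfar x hx
    · exact hC x hx y hy hxy
  have := hmax _ (mem_filter.2 ⟨mem_univ _, hvC'⟩)
  rw [card_insert_of_notMem hvC] at this
  omega

lemma exists_binary_code_card_bound [DecidableEq ι] {d a : ℕ} (hd : 0 < d) (ha : 1 ≤ a) :
    ∃ C : Finset (ι → Bool), (∀ x ∈ C, ∀ y ∈ C, x ≠ y → d ≤ hammingDist x y) ∧
      2 ^ Fintype.card ι * a ^ (Fintype.card ι - (d - 1)) ≤ #C * (a + 1) ^ Fintype.card ι := by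
  obtain ⟨C, hsep, hcover⟩ := exists_hammingDist_separated_covering (ι := ι) (α := Bool) hd
  refine ⟨C, hsep, ?_⟩
  have hunion : (univ : Finset (ι → Bool)) ⊆ C.biUnion fun x => {w | hammingDist w x ≤ d - 1} := by
    intro v _
    obtain ⟨x, hx, hvx⟩ := hcover v
    exact mem_biUnion.2 ⟨x, hx, mem_filter.2 ⟨mem_univ _, by omega⟩⟩
  calc 2 ^ Fintype.card ι * a ^ (Fintype.card ι - (d - 1))
      ≤ (∑ x ∈ C, #{w | hammingDist w x ≤ d - 1}) * a ^ (Fintype.card ι - (d - 1)) := by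
        gcongr
        simpa using (card_le_card hunion).trans card_biUnion_le
    _ = ∑ x ∈ C, #{w | hammingDist w x ≤ d - 1} * a ^ (Fintype.card ι - (d - 1)) := sum_mul _ _ _
    _ ≤ ∑ _x ∈ C, (a + 1) ^ Fintype.card ι :=
        sum_le_sum fun x _ => card_hammingBall_mul_pow_le x (d - 1) ha
    _ = #C * (a + 1) ^ Fintype.card ι := by rw [sum_const, smul_eq_mul]

def signVector (s : ℝ) (x : ι → Bool) : ι → ℝ := fun k => if x k then s else -s

lemma signVector_dotProduct_self (s : ℝ) (x : ι → Bool) :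
    signVector s x ⬝ᵥ signVector s x = Fintype.card ι * s ^ 2 := by
  have hsq (k : ι) : signVector s x k * signVector s x k = s ^ 2 := by
    unfold signVector; split_ifs <;> ring
  simp only [dotProduct, hsq, sum_const, card_univ, nsmul_eq_mul]

lemma signVector_sub_dotProduct_self (s : ℝ) (x y : ι → Bool) :
    (signVector s x - signVector s y) ⬝ᵥ (signVector s x - signVector s y) =
      4 * hammingDist x y * s ^ 2 := by
  have hsq (k : ι) : (signVector s x - signVector s y) k * (signVector s x - signVector s y) k =
      if x k ≠ y k then 4 * s ^ 2 else 0 := by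
    simp only [Pi.sub_apply, signVector]
    cases x k <;> cases y k <;> norm_num <;> ring
  simp only [dotProduct, hsq, ← sum_filter, sum_const, nsmul_eq_mul, hammingDist]
  ring

end HammingCode

lemma seven_le_fifteen_mul_log_fifteen_sub :
    7 ≤ 15 * Real.log 15 - 48 * Real.log 2 := by
  have hexp : Real.exp 7 ≤ 15 ^ 15 / 2 ^ 48 := by
    rw [show (7 : ℝ) = (7 : ℕ) by norm_num, ← Real.exp_one_pow]
    calc Real.exp 1 ^ 7 ≤ 2.7182818286 ^ 7 := by gcongr; exact Real.exp_one_lt_d9.le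
      _ ≤ 15 ^ 15 / 2 ^ 48 := by norm_num
  rw [← Real.le_log_iff_exp_le (by positivity), Real.log_div (by positivity) (by positivity),
    Real.log_pow, Real.log_pow] at hexp
  push_cast at hexp
  linarith

lemma exists_binary_code_log_card (n : ℕ) :
    ∃ C : Finset (Fin n → Bool), (∀ x ∈ C, ∀ y ∈ C, x ≠ y → n ≤ 16 * hammingDist x y) ∧
      7 / 16 * n ≤ Real.log #C := by
  -- radius `n / 16` and weight `15`: `log #C ≥ n (15 log 15 - 48 log 2) / 16`
  obtain ⟨C, hsep, hcard⟩ :=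
    exists_binary_code_card_bound (ι := Fin n) (d := n / 16 + 1) (a := 15) (by omega) (by norm_num)
  refine ⟨C, fun x hx y hy hxy => by have := hsep x hx y hy hxy; omega, ?_⟩
  simp only [Fintype.card_fin, Nat.add_sub_cancel] at hcard
  have hC : 0 < #C := Nat.pos_of_ne_zero fun h => by simp [h] at hcard
  have hlog := Real.log_le_log (by positivity) (show (2 ^ n * 15 ^ (n - n / 16) : ℝ) ≤ #C * 16 ^ n
    by exact_mod_cast hcard)
  rw [Real.log_mul (by positivity) (by positivity), Real.log_mul (by positivity) (by positivity),
    Real.log_pow, Real.log_pow, Real.log_pow, show (16 : ℝ) = 2 ^ 4 by norm_num, Real.log_pow]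
    at hlog
  have hnr : 15 / 16 * (n : ℝ) ≤ ((n - n / 16 : ℕ) : ℝ) := by
    have : 16 * ((n / 16 : ℕ) : ℝ) ≤ n := by exact_mod_cast Nat.mul_div_le n 16
    push_cast [Nat.cast_sub (Nat.div_le_self n 16)]
    linarith
  have hlog15 : 0 ≤ Real.log 15 := Real.log_nonneg (by norm_num)
  nlinarith [seven_le_fifteen_mul_log_fifteen_sub, mul_le_mul_of_nonneg_right hnr hlog15]

lemma log_le_seven_sixteenths_mul {x : ℝ} (hx : 0 < x) : Real.log x ≤ 7 / 16 * x := by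
  have h := Real.log_le_sub_one_of_pos (div_pos hx (Real.exp_pos 1))
  rw [Real.log_div hx.ne' (Real.exp_pos 1).ne', Real.log_exp, div_eq_mul_inv] at h
  have he : (Real.exp 1)⁻¹ ≤ 7 / 16 := by
    rw [inv_le_comm₀ (Real.exp_pos 1) (by norm_num)]
    linarith [Real.exp_one_gt_d9]
  nlinarith

/-- Hypercube packing of unit vectors: there is an absolute constant `c > 1/30` such
that for every `m ≥ 1` there exist unit vectors `J⁽¹⁾, …, J⁽ᴹ⁾ ∈ ℝᵐ` with
pairwise squared distances at least `1/4` and `log M ≥ max{c m, log m}`. -/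
theorem stmt18 :
    ∃ c : ℝ, 1 / 30 < c ∧
      ∀ m : ℕ, 1 ≤ m →
        ∃ M : ℕ, ∃ J : Fin M → Fin m → ℝ,
          (∀ i, J i ⬝ᵥ J i = 1) ∧
          (∀ i j, i ≠ j → (1 / 4 : ℝ) ≤ (J i - J j) ⬝ᵥ (J i - J j)) ∧
          max (c * m) (Real.log m) ≤ Real.log M := by
  refine ⟨7 / 16, by norm_num, fun m hm => ?_⟩
  obtain ⟨C, hsep, hcard⟩ := exists_binary_code_log_card m
  have hm0 : (0 : ℝ) < m := by exact_mod_cast hm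
  have hs : (√m)⁻¹ ^ 2 = (m : ℝ)⁻¹ := by rw [inv_pow, Real.sq_sqrt hm0.le]
  let word (i : Fin #C) : Fin m → Bool := C.equivFin.symm i
  refine ⟨#C, fun i => signVector (√m)⁻¹ (word i), fun i => ?_, fun i j hij => ?_,
    max_le hcard ((log_le_seven_sixteenths_mul hm0).trans hcard)⟩
  · rw [signVector_dotProduct_self, Fintype.card_fin, hs, mul_inv_cancel₀ hm0.ne']
  · have hdist := hsep _ (C.equivFin.symm i).2 _ (C.equivFin.symm j).2
      fun h => hij (C.equivFin.symm.injective (Subtype.ext h))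
    rw [signVector_sub_dotProduct_self, hs, ← div_eq_mul_inv, le_div_iff₀ hm0]
    have : (m : ℝ) ≤ 16 * hammingDist (word i) (word j) := by exact_mod_cast hdist
    linarith
end
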